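/- Let G be a graph whose vertex set is partitioned into ℓ cliques C_1, …, C_ℓ, and let G' be obtained from G by adding new vertices v_1, …, v_ℓ with N(v_i) = C_i. Then G has an independent set of size ℓ if and only if G' has an induced matching of size ℓ. Moreover, IS(G') = ℓ. -/

import Mathlib

variable {V : Type*}

/-- `M` is a matching in `G`: a finite set of edges of `G` that are pairwise non-incident. -/
def IsMatchingSet (G : SimpleGraph V) (M : Finset (Sym2 V)) : Prop :=
  (∀ e ∈ M, e ∈ G.edgeSet) ∧
  ∀ e ∈ M, ∀ f ∈ M, e ≠ f → ∀ v : V, v ∈ e → v ∉ f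

/-- `M` is an induced matching in `G`: a matching such that no edge of `G`
joins two distinct edges of `M`. -/
def IsInducedMatchingSet (G : SimpleGraph V) (M : Finset (Sym2 V)) : Prop :=
  IsMatchingSet G M ∧
  ∀ e ∈ M, ∀ f ∈ M, e ≠ f → ∀ a ∈ e, ∀ b ∈ f, ¬ G.Adj a b

/-- `S` is an independent set in `G`. -/
def IsIndepFinset (G : SimpleGraph V) (S : Finset V) : Prop :=
  ∀ a ∈ S, ∀ b ∈ S, ¬ G.Adj a b

/-- Maximum matching size `MM(G)`. -/
noncomputable def MMn (G : SimpleGraph V) : ℕ :=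
  sSup {n | ∃ M : Finset (Sym2 V), IsMatchingSet G M ∧ M.card = n}

/-- Maximum induced matching size `IM(G)`. -/
noncomputable def IMn (G : SimpleGraph V) : ℕ :=
  sSup {n | ∃ M : Finset (Sym2 V), IsInducedMatchingSet G M ∧ M.card = n}

/-- Maximum independent set size `IS(G)`. -/
noncomputable def ISn (G : SimpleGraph V) : ℕ :=
  sSup {n | ∃ S : Finset V, IsIndepFinset G S ∧ S.card = n}

/-- Base adjacency for the reduction from Multicolored Independent Set:
to `G` we add a new vertex for each clique `C i`, adjacent exactly to `C i`. -/
def MISAdj (G : SimpleGraph V) (ℓ : ℕ) (C : Fin ℓ → Finset V) :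
    (V ⊕ Fin ℓ) → (V ⊕ Fin ℓ) → Prop
  | Sum.inl a, Sum.inl b => G.Adj a b
  | Sum.inr i, Sum.inl a => a ∈ C i
  | _, _ => False

def MISGraph (G : SimpleGraph V) (ℓ : ℕ) (C : Fin ℓ → Finset V) :
    SimpleGraph (V ⊕ Fin ℓ) :=
  SimpleGraph.fromRel (MISAdj G ℓ C)

/-! An independent set of `G` meets each clique `C i` at most once, so joining each of its vertices
to the new vertex of its clique gives an induced matching of the same size; conversely, every edge
of `G'` has an endpoint in `G`, and one such endpoint per edge of an induced matching gives an
independent set of `G`. The cliques `C i ∪ {v_i}` cover `G'`, so `IS(G') ≤ ℓ`, with equality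
attained by `{v_1, …, v_ℓ}`. -/

open Finset Sum

namespace IsIndepFinset

variable {ι : Type*} {G : SimpleGraph V} {S : Finset V}

theorem injOn_of_isClique_fiber (hS : IsIndepFinset G S) {f : V → ι}
    (hf : ∀ i, G.IsClique {v | f v = i}) : Set.InjOn f S := by
  intro v hv w hw hvw
  by_contra hne
  exact hS v hv w hw (hf (f v) rfl hvw.symm hne)

theorem card_le_of_isClique_fiber [Fintype ι] (hS : IsIndepFinset G S) {f : V → ι}
    (hf : ∀ i, G.IsClique {v | f v = i}) : S.card ≤ Fintype.card ι := by
  simpa using card_le_card_of_injOn f (fun _ _ => mem_coe.2 (mem_univ _))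
    (hS.injOn_of_isClique_fiber hf)

end IsIndepFinset

theorem ISn_eq_of_forall_card_le {G : SimpleGraph V} {n : ℕ}
    (hex : ∃ S, IsIndepFinset G S ∧ S.card = n) (hle : ∀ S, IsIndepFinset G S → S.card ≤ n) :
    ISn G = n :=
  IsGreatest.csSup_eq ⟨hex, by rintro _ ⟨S, hS, rfl⟩; exact hle S hS⟩

section MISGraph

variable {G : SimpleGraph V} {ℓ : ℕ} {C : Fin ℓ → Finset V}

theorem misGraph_adj_inl_inl {a b : V} : (MISGraph G ℓ C).Adj (inl a) (inl b) ↔ G.Adj a b := by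
  simp only [MISGraph, SimpleGraph.fromRel_adj, MISAdj, ne_eq, inl.injEq]
  exact ⟨fun ⟨_, h⟩ => h.elim id G.adj_symm, fun h => ⟨h.ne, Or.inl h⟩⟩

theorem misGraph_adj_inl_inr {a : V} {i : Fin ℓ} :
    (MISGraph G ℓ C).Adj (inl a) (inr i) ↔ a ∈ C i := by
  simp [MISGraph, MISAdj]

theorem misGraph_not_adj_inr_inr {i j : Fin ℓ} : ¬ (MISGraph G ℓ C).Adj (inr i) (inr j) := by
  simp [MISGraph, MISAdj]

theorem exists_inl_mem_of_mem_edgeSet_misGraph {e : Sym2 (V ⊕ Fin ℓ)}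
    (he : e ∈ (MISGraph G ℓ C).edgeSet) : ∃ a : V, inl a ∈ e := by
  induction e using Sym2.ind with
  | _ x y =>
    match x, y with
    | inl a, _ => exact ⟨a, Sym2.mem_mk_left _ _⟩
    | inr _, inl a => exact ⟨a, Sym2.mem_mk_right _ _⟩
    | inr _, inr _ => exact absurd he misGraph_not_adj_inr_inr

theorem isIndepFinset_misGraph_inr :
    IsIndepFinset (MISGraph G ℓ C) (univ.map .inr) := by
  simp only [IsIndepFinset, mem_map, mem_univ, true_and, Function.Embedding.inr_apply,
    forall_exists_index, forall_apply_eq_imp_iff]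
  exact fun _ _ => misGraph_not_adj_inr_inr

theorem exists_isIndepFinset_of_isInducedMatchingSet_misGraph
    {M : Finset (Sym2 (V ⊕ Fin ℓ))} (hM : IsInducedMatchingSet (MISGraph G ℓ C) M) :
    ∃ S : Finset V, IsIndepFinset G S ∧ S.card = M.card := by
  classical
  obtain ⟨⟨hedge, hdisj⟩, hind⟩ := hM
  choose pick hpick using fun e : M => exists_inl_mem_of_mem_edgeSet_misGraph (hedge e.1 e.2)
  have hpick_inj : Function.Injective pick := by
    intro e f hef
    by_contra hne
    exact hdisj e e.2 f f.2 (Subtype.coe_ne_coe.2 hne) _ (hpick e) (hef ▸ hpick f)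
  refine ⟨M.attach.image pick, ?_, by rw [card_image_of_injective _ hpick_inj, card_attach]⟩
  simp only [IsIndepFinset, mem_image, mem_attach, true_and, forall_exists_index,
    forall_apply_eq_imp_iff]
  intro e f hadj
  obtain rfl | hne := eq_or_ne e f
  · exact G.irrefl hadj
  · exact hind e e.2 f f.2 (Subtype.coe_ne_coe.2 hne) _ (hpick e) _ (hpick f)
      (misGraph_adj_inl_inl.2 hadj)

variable {idx : V → Fin ℓ} (hmem : ∀ v i, v ∈ C i ↔ idx v = i)
include hmem

theorem isClique_fiber_of_isClique (hclique : ∀ i, G.IsClique (C i : Set V)) (i : Fin ℓ) :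
    G.IsClique {v | idx v = i} := by
  rw [show {v | idx v = i} = (C i : Set V) from Set.ext fun v => (hmem v i).symm]
  exact hclique i

/-- The fiber over `i` is the clique `C i ∪ {v_i}`. -/
theorem isClique_fiber_sumElim_misGraph (hfiber : ∀ i, G.IsClique {v | idx v = i}) (i : Fin ℓ) :
    (MISGraph G ℓ C).IsClique {x | Sum.elim idx id x = i} := by
  rintro (a | j) ha (b | k) hb hne <;>
    simp only [Set.mem_ofPred_eq, elim_inl, elim_inr, id] at ha hb
  · exact misGraph_adj_inl_inl.2 (hfiber i ha hb (fun h => hne (congrArg inl h)))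
  · exact misGraph_adj_inl_inr.2 ((hmem a k).2 (ha.trans hb.symm))
  · exact (misGraph_adj_inl_inr.2 ((hmem b j).2 (hb.trans ha.symm))).symm
  · exact absurd (congrArg inr (ha.trans hb.symm)) hne

theorem card_le_of_isIndepFinset_misGraph (hfiber : ∀ i, G.IsClique {v | idx v = i})
    {S : Finset (V ⊕ Fin ℓ)} (hS : IsIndepFinset (MISGraph G ℓ C) S) : S.card ≤ ℓ := by
  simpa using hS.card_le_of_isClique_fiber (isClique_fiber_sumElim_misGraph hmem hfiber)

/-- Each `v ∈ S` is matched to `v_{idx v}`; since `idx` is injective on `S`, these edges are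
pairwise far apart. -/
theorem exists_isInducedMatchingSet_misGraph (hfiber : ∀ i, G.IsClique {v | idx v = i})
    {S : Finset V} (hS : IsIndepFinset G S) :
    ∃ M : Finset (Sym2 (V ⊕ Fin ℓ)), IsInducedMatchingSet (MISGraph G ℓ C) M ∧
      M.card = S.card := by
  classical
  set m : V → Sym2 (V ⊕ Fin ℓ) := fun v => s(inl v, inr (idx v)) with hm
  have hm_inj : Function.Injective m := fun v w h => by simp_all
  have hsep : ∀ v ∈ S, ∀ w ∈ S, v ≠ w → ∀ x ∈ m v, ∀ y ∈ m w,
      x ≠ y ∧ ¬ (MISGraph G ℓ C).Adj x y := by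
    intro v hv w hw hne x hx y hy
    have hidx : idx v ≠ idx w := fun h => hne (hS.injOn_of_isClique_fiber hfiber hv hw h)
    simp only [hm, Sym2.mem_iff] at hx hy
    rcases hx with rfl | rfl <;> rcases hy with rfl | rfl
    · exact ⟨fun h => hne (inl_injective h), fun h => hS v hv w hw (misGraph_adj_inl_inl.1 h)⟩
    · exact ⟨inl_ne_inr, fun h => hidx ((hmem v _).1 (misGraph_adj_inl_inr.1 h))⟩
    · exact ⟨inr_ne_inl, fun h => hidx ((hmem w _).1 (misGraph_adj_inl_inr.1 h.symm)).symm⟩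
    · exact ⟨fun h => hidx (inr_injective h), misGraph_not_adj_inr_inr⟩
  refine ⟨S.image m, ⟨⟨?_, ?_⟩, ?_⟩, card_image_of_injective _ hm_inj⟩ <;>
    simp only [forall_mem_image]
  · exact fun v _ => misGraph_adj_inl_inr.2 ((hmem v _).2 rfl)
  · intro v hv w hw hne x hx hx'
    exact (hsep v hv w hw (ne_of_apply_ne m hne) x hx x hx').1 rfl
  · intro v hv w hw hne x hx y hy
    exact (hsep v hv w hw (ne_of_apply_ne m hne) x hx y hy).2

end MISGraph

theorem stmt_18_general {V : Type*} (G : SimpleGraph V) (ℓ : ℕ)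
    (C : Fin ℓ → Finset V)
    (hclique : ∀ i : Fin ℓ, G.IsClique (C i : Set V))
    (hpart : ∀ v : V, ∃! i : Fin ℓ, v ∈ C i) :
    ((∃ S : Finset V, IsIndepFinset G S ∧ S.card = ℓ) ↔
      (∃ M : Finset (Sym2 (V ⊕ Fin ℓ)), IsInducedMatchingSet (MISGraph G ℓ C) M ∧
        M.card = ℓ)) ∧
    ISn (MISGraph G ℓ C) = ℓ := by
  choose idx hidx using hpart
  have hmem : ∀ v i, v ∈ C i ↔ idx v = i :=
    fun v i => ⟨fun h => ((hidx v).2 i h).symm, fun h => h ▸ (hidx v).1⟩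
  have hfiber := isClique_fiber_of_isClique hmem hclique
  refine ⟨⟨fun ⟨S, hS, hcard⟩ => ?_, fun ⟨M, hM, hcard⟩ => ?_⟩, ?_⟩
  · obtain ⟨M, hM, hMcard⟩ := exists_isInducedMatchingSet_misGraph hmem hfiber hS
    exact ⟨M, hM, hMcard.trans hcard⟩
  · obtain ⟨S, hS, hScard⟩ := exists_isIndepFinset_of_isInducedMatchingSet_misGraph hM
    exact ⟨S, hS, hScard.trans hcard⟩
  · exact ISn_eq_of_forall_card_le ⟨_, isIndepFinset_misGraph_inr, by simp⟩
      fun S hS => card_le_of_isIndepFinset_misGraph hmem hfiber hS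

/-- If `V(G)` is partitioned into `ℓ` cliques `C i` and `G'` adds a vertex `v i`
with `N(v i) = C i`, then `G` has an independent set of size `ℓ` iff `G'` has an
induced matching of size `ℓ`; moreover `IS(G') = ℓ`. -/
theorem stmt_18 {V : Type*} [Fintype V] (G : SimpleGraph V) (ℓ : ℕ)
    (C : Fin ℓ → Finset V)
    (hclique : ∀ i : Fin ℓ, G.IsClique (C i : Set V))
    (hpart : ∀ v : V, ∃! i : Fin ℓ, v ∈ C i) :
    ((∃ S : Finset V, IsIndepFinset G S ∧ S.card = ℓ) ↔
      (∃ M : Finset (Sym2 (V ⊕ Fin ℓ)), IsInducedMatchingSet (MISGraph G ℓ C) M ∧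
        M.card = ℓ)) ∧
    ISn (MISGraph G ℓ C) = ℓ :=
  stmt_18_general G ℓ C hclique hpart
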